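/- arXiv:1107.3806 — 4 statements merged into one kernel-verified Lean document; each statement's English description precedes it below -/
import Mathlib

section
/- For a real random variable Y with median μ, define R(y,t) = |y - (μ+t)| - |y - μ| + t·(I{y > μ} - I{y ≤ μ}). If Y has a density f that is continuous and positive at μ, then E R(Y,t) = f(μ) t² + o(t²) as t → 0. -/
/-!
The remainder `R(y, t)` is the tent `2 |y - (μ + t)|` on the interval `Ι μ (μ + t)` and
vanishes outside it, so `E R(Y, t) = ∫_{Ι μ (μ + t)} 2 |y - (μ + t)| f(y) dy`. The tent has area
`t²`, so replacing `f(y)` by `f(μ)` costs at most `t² · sup_{|y - μ| ≤ |t|} |f(y) - f(μ)| = o(t²)`.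
-/

open MeasureTheory Filter Asymptotics Set
open scoped Interval Topology

noncomputable def medianRemainder (μ t y : ℝ) : ℝ :=
  |y - (μ + t)| - |y - μ|
    + t * ((if μ < y then (1:ℝ) else 0) - (if y ≤ μ then (1:ℝ) else 0))

lemma medianRemainder_eq_indicator (μ t : ℝ) :
    medianRemainder μ t = (Ι μ (μ + t)).indicator fun y => 2 * |y - (μ + t)| := by
  funext y
  simp only [medianRemainder, indicator, mem_uIoc]
  split_ifs <;> grind [abs_of_nonneg, abs_of_nonpos]

lemma measurable_medianRemainder (μ t : ℝ) : Measurable (medianRemainder μ t) := by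
  rw [medianRemainder_eq_indicator]
  exact (by fun_prop : Continuous fun y : ℝ => 2 * |y - (μ + t)|).measurable.indicator
    measurableSet_uIoc

lemma integral_medianRemainder_mul (μ t : ℝ) (f : ℝ → ℝ) :
    ∫ y, medianRemainder μ t y * f y = ∫ y in Ι μ (μ + t), 2 * |y - (μ + t)| * f y := by
  simp_rw [medianRemainder_eq_indicator, ← indicator_mul_left]
  exact integral_indicator measurableSet_uIoc

lemma setIntegral_uIoc_two_mul_abs_sub (a t : ℝ) :
    ∫ y in Ι a (a + t), 2 * |y - (a + t)| = t ^ 2 := by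
  have h := integral_pow_abs_sub_uIoc (a := a + t) (b := a) 1
  simp only [pow_one] at h
  rw [integral_const_mul, uIoc_comm, h]
  norm_num [sq_abs]
  ring

section

variable {f : ℝ → ℝ} {a : ℝ}

lemma setIntegral_uIoc_two_mul_abs_sub_mul_sub (hf : LocallyIntegrable f) (t : ℝ) :
    (∫ y in Ι a (a + t), 2 * |y - (a + t)| * f y) - f a * t ^ 2
      = ∫ y in Ι a (a + t), 2 * |y - (a + t)| * (f y - f a) := by
  have hf' : IntegrableOn (fun y => 2 * |y - (a + t)| * f y) (Ι a (a + t)) :=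
    ((hf.integrableOn_isCompact isCompact_uIcc).continuousOn_mul (by fun_prop)
      isCompact_uIcc).mono_set uIoc_subset_uIcc
  have hc : IntegrableOn (fun y => 2 * |y - (a + t)| * f a) (Ι a (a + t)) :=
    Continuous.integrableOn_uIoc (by fun_prop)
  simp_rw [mul_sub]
  rw [integral_sub hf' hc, integral_mul_const, setIntegral_uIoc_two_mul_abs_sub]
  ring

lemma norm_setIntegral_uIoc_two_mul_abs_sub_mul_le {g : ℝ → ℝ} {ε t : ℝ}
    (hg : ∀ y ∈ Ι a (a + t), |g y| ≤ ε) :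
    ‖∫ y in Ι a (a + t), 2 * |y - (a + t)| * g y‖ ≤ 2 * ε * t ^ 2 := by
  have hkernel : ∀ y ∈ Ι a (a + t), ‖2 * |y - (a + t)| * g y‖ ≤ 2 * |t| * ε := by
    intro y hy
    have hy' : |y - (a + t)| ≤ |t| := by
      simpa [abs_sub_comm] using abs_sub_right_of_mem_uIcc (uIoc_subset_uIcc hy)
    rw [Real.norm_eq_abs, abs_mul, abs_mul, abs_two, abs_abs]
    gcongr
    exact hg y hy
  calc _ ≤ 2 * |t| * ε * volume.real (Ι a (a + t)) :=
        norm_setIntegral_le_of_norm_le_const (by simp [Real.volume_uIoc]) hkernel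
    _ = 2 * ε * t ^ 2 := by
        rw [measureReal_def, Real.volume_uIoc, add_sub_cancel_left,
          ENNReal.toReal_ofReal (abs_nonneg t), ← sq_abs t]
        ring

theorem isLittleO_setIntegral_uIoc_two_mul_abs_sub_mul (hf : LocallyIntegrable f)
    (hcont : ContinuousAt f a) :
    (fun t => (∫ y in Ι a (a + t), 2 * |y - (a + t)| * f y) - f a * t ^ 2)
      =o[𝓝 0] fun t => t ^ 2 := by
  refine isLittleO_iff.2 fun ε hε => ?_
  obtain ⟨δ, hδ, hfδ⟩ := Metric.continuousAt_iff.1 hcont (ε / 2) (half_pos hε)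
  filter_upwards [Metric.ball_mem_nhds 0 hδ] with t ht
  rw [setIntegral_uIoc_two_mul_abs_sub_mul_sub hf, Real.norm_of_nonneg (sq_nonneg t)]
  calc _ ≤ 2 * (ε / 2) * t ^ 2 := norm_setIntegral_uIoc_two_mul_abs_sub_mul_le fun y hy => by
          refine (hfδ ?_).le
          calc dist y a ≤ |a + t - a| := abs_sub_left_of_mem_uIcc (uIoc_subset_uIcc hy)
            _ < δ := by simpa using ht
    _ = ε * t ^ 2 := by ring

end

section

variable {Ω : Type*} [MeasurableSpace Ω] {ℙ : Measure Ω} {Y : Ω → ℝ} {f : ℝ → ℝ}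

lemma integrable_of_map_eq_withDensity [IsFiniteMeasure ℙ] (hf_nonneg : ∀ y, 0 ≤ f y)
    (hf_meas : AEStronglyMeasurable f)
    (hdens : Measure.map Y ℙ = volume.withDensity fun y => ENNReal.ofReal (f y)) :
    Integrable f := by
  have : IsFiniteMeasure (volume.withDensity fun y => ENNReal.ofReal (f y)) :=
    hdens ▸ inferInstance
  refine ⟨hf_meas, ?_⟩
  rw [hasFiniteIntegral_iff_ofReal (ae_of_all _ hf_nonneg), ← setLIntegral_univ,
    ← withDensity_apply _ MeasurableSet.univ]
  exact measure_lt_top _ _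

lemma integral_comp_eq_integral_mul_of_map_eq_withDensity (hY : AEMeasurable Y ℙ)
    (hf_nonneg : ∀ y, 0 ≤ f y) (hf_meas : Measurable f)
    (hdens : Measure.map Y ℙ = volume.withDensity fun y => ENNReal.ofReal (f y))
    {g : ℝ → ℝ} (hg : AEStronglyMeasurable g (Measure.map Y ℙ)) :
    ∫ ω, g (Y ω) ∂ℙ = ∫ y, g y * f y := by
  rw [← integral_map hY hg, hdens, integral_withDensity_eq_integral_toReal_smul
    hf_meas.ennreal_ofReal (ae_of_all _ fun _ => ENNReal.ofReal_lt_top)]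
  simp [ENNReal.toReal_ofReal (hf_nonneg _), mul_comm]

end

theorem median_remainder_expectation_general
    {Ω : Type*} [MeasurableSpace Ω] (ℙ : Measure Ω) [IsProbabilityMeasure ℙ]
    (Y : Ω → ℝ) (hY : Measurable Y)
    (f : ℝ → ℝ) (hf_nonneg : ∀ y, 0 ≤ f y) (hf_meas : Measurable f)
    (hdens : Measure.map Y ℙ = volume.withDensity (fun y => ENNReal.ofReal (f y)))
    (μ : ℝ)
    (hf_cont : ContinuousAt f μ)
    (R : ℝ → ℝ → ℝ)
    (hR : ∀ y t, R y t = |y - (μ + t)| - |y - μ|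
        + t * ((if μ < y then (1:ℝ) else 0) - (if y ≤ μ then (1:ℝ) else 0))) :
    (fun t => (∫ ω, R (Y ω) t ∂ℙ) - f μ * t ^ 2) =o[nhds (0:ℝ)] fun t => t ^ 2 := by
  obtain rfl : R = fun y t => medianRemainder μ t y := funext₂ hR
  have hf_int : Integrable f :=
    integrable_of_map_eq_withDensity hf_nonneg hf_meas.aestronglyMeasurable hdens
  refine (isLittleO_setIntegral_uIoc_two_mul_abs_sub_mul hf_int.locallyIntegrable hf_cont
    ).congr_left fun t => ?_
  rw [integral_comp_eq_integral_mul_of_map_eq_withDensity hY.aemeasurable hf_nonneg hf_meas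
    hdens (measurable_medianRemainder μ t).aestronglyMeasurable, integral_medianRemainder_mul]

/-- Section 3A of Hjort–Pollard: for `Y` with density `f` continuous and
positive at its median `μ`, the remainder
`R(y,t) = |y-(μ+t)| - |y-μ| + t(I{y>μ} - I{y≤μ})` satisfies
`E R(Y,t) = f(μ) t² + o(t²)` as `t → 0`. -/
theorem median_remainder_expectation
    {Ω : Type*} [MeasurableSpace Ω] (ℙ : Measure Ω) [IsProbabilityMeasure ℙ]
    (Y : Ω → ℝ) (hY : Measurable Y)
    (f : ℝ → ℝ) (hf_nonneg : ∀ y, 0 ≤ f y) (hf_meas : Measurable f)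
    (hdens : Measure.map Y ℙ = volume.withDensity (fun y => ENNReal.ofReal (f y)))
    (μ : ℝ)
    (hmed : ℙ {ω | Y ω ≤ μ} = 1/2)
    (hf_cont : ContinuousAt f μ) (hf_pos : 0 < f μ)
    (R : ℝ → ℝ → ℝ)
    (hR : ∀ y t, R y t = |y - (μ + t)| - |y - μ|
        + t * ((if μ < y then (1:ℝ) else 0) - (if y ≤ μ then (1:ℝ) else 0))) :
    (fun t => (∫ ω, R (Y ω) t ∂ℙ) - f μ * t ^ 2) =o[nhds (0:ℝ)] fun t => t ^ 2 :=
  median_remainder_expectation_general ℙ Y hY f hf_nonneg hf_meas hdens μ hf_cont R hR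
end

section
/- Let π(u) = e^u/(1+e^u). For all real u and h, log((1+e^{u+h})/(1+e^u)) = π(u)h + (1/2)π(u)(1-π(u))h² + (1/6)π(u)(1-π(u))γ(u,h)h³ for some γ(u,h) with |γ(u,h)| ≤ e^{|h|}. -/
/-!
For the softplus function `L x = log (1 + eˣ)` one has `L' = π`, `L'' = π (1 - π)` and
`L''' = π (1 - π) (1 - 2π)`, so Taylor's theorem with Lagrange remainder gives the expansion with
`γ = L'''(c) / L''(u)` for some `c` between `u` and `u + h`. Since `|1 - 2π| ≤ 1`, it remains to see
`L''(c) ≤ e^{|c - u|} L''(u)`: this follows from `L''(x) = π(x) π(-x)` and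
`π(a) ≤ e^{max (a - b) 0} π(b)`.
-/

open Real Set Finset
open scoped Nat

theorem exists_eq_taylor_add_lagrange_remainder {f : ℝ → ℝ} {n : ℕ} (hf : ContDiff ℝ (n + 1) f)
    (x₀ x : ℝ) :
    ∃ c ∈ uIcc x₀ x, f x = ∑ k ∈ range (n + 1), iteratedDeriv k f x₀ / k ! * (x - x₀) ^ k
      + iteratedDeriv (n + 1) f c / (n + 1)! * (x - x₀) ^ (n + 1) := by
  rcases eq_or_ne x₀ x with rfl | hne
  · exact ⟨x₀, left_mem_uIcc, by simp [Finset.sum_range_succ']⟩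
  obtain ⟨c, hc, hT⟩ := taylor_mean_remainder_lagrange_iteratedDeriv hne hf.contDiffOn
  have hcoeff : ∀ k ∈ range (n + 1),
      iteratedDerivWithin k f (uIcc x₀ x) x₀ = iteratedDeriv k f x₀ := fun k hk =>
    iteratedDerivWithin_eq_iteratedDeriv (uniqueDiffOn_uIcc hne)
      (hf.contDiffAt.of_le (by exact_mod_cast (Finset.mem_range.1 hk).le)) left_mem_uIcc
  refine ⟨c, uIoo_subset_uIcc_self hc, ?_⟩
  rw [taylor_within_apply, Finset.sum_congr rfl fun k hk => by rw [hcoeff k hk],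
    sub_eq_iff_eq_add'] at hT
  rw [hT, div_mul_eq_mul_div]
  congr 1
  exact Finset.sum_congr rfl fun k _ => by rw [smul_eq_mul]; ring

namespace Real

lemma sigmoid_eq_exp_div (x : ℝ) : sigmoid x = exp x / (1 + exp x) := by
  rw [sigmoid_def, exp_neg]
  field_simp
  ring

lemma sigmoid_le_exp_max_mul (a b : ℝ) : sigmoid a ≤ exp (max (a - b) 0) * sigmoid b := by
  have key : 1 + exp (-b) ≤ exp (max (a - b) 0) * (1 + exp (-a)) := by
    rw [mul_one_add, ← exp_add]
    gcongr
    · exact one_le_exp (le_max_right _ _)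
    · linarith [le_max_left (a - b) 0]
  rw [sigmoid_def, sigmoid_def, ← div_eq_mul_inv, le_div_iff₀ (by positivity),
    inv_mul_le_iff₀ (by positivity), mul_comm]
  exact key

lemma sigmoid_mul_one_sub_le (a b : ℝ) :
    sigmoid a * (1 - sigmoid a) ≤ exp |a - b| * (sigmoid b * (1 - sigmoid b)) := by
  have ha := sigmoid_le_exp_max_mul a b
  have hna := sigmoid_le_exp_max_mul (-a) (-b)
  rw [← sigmoid_neg, ← sigmoid_neg, ← max_zero_add_max_neg_zero_eq_abs_self, exp_add]
  rw [show -a - -b = -(a - b) by ring] at hna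
  calc sigmoid a * sigmoid (-a)
      ≤ (exp (max (a - b) 0) * sigmoid b) * (exp (max (-(a - b)) 0) * sigmoid (-b)) :=
        mul_le_mul ha hna (sigmoid_pos _).le (mul_pos (exp_pos _) (sigmoid_pos _)).le
    _ = _ := by ring

lemma sigmoid_mul_one_sub_pos (x : ℝ) : 0 < sigmoid x * (1 - sigmoid x) :=
  mul_pos (sigmoid_pos x) (sub_pos.2 (sigmoid_lt_one x))

lemma abs_one_sub_two_mul_sigmoid_le (x : ℝ) : |1 - 2 * sigmoid x| ≤ 1 :=
  abs_le.2 ⟨by linarith [sigmoid_lt_one x], by linarith [sigmoid_pos x]⟩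

noncomputable def softplus (x : ℝ) : ℝ := log (1 + exp x)

lemma hasDerivAt_softplus (x : ℝ) : HasDerivAt softplus (sigmoid x) x := by
  rw [sigmoid_eq_exp_div]
  exact ((hasDerivAt_exp x).const_add 1).log (by positivity)

lemma deriv_softplus : deriv softplus = sigmoid :=
  funext fun x => (hasDerivAt_softplus x).deriv

lemma contDiff_softplus {n : WithTop ℕ∞} : ContDiff ℝ n softplus :=
  (contDiff_const.add contDiff_exp).log fun x => by positivity

lemma iteratedDeriv_two_softplus (x : ℝ) :
    iteratedDeriv 2 softplus x = sigmoid x * (1 - sigmoid x) := by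
  rw [iteratedDeriv_succ', deriv_softplus, iteratedDeriv_one, deriv_sigmoid]

lemma iteratedDeriv_three_softplus (x : ℝ) :
    iteratedDeriv 3 softplus x = sigmoid x * (1 - sigmoid x) * (1 - 2 * sigmoid x) := by
  rw [iteratedDeriv_succ', deriv_softplus, iteratedDeriv_succ', iteratedDeriv_one, deriv_sigmoid]
  have h := hasDerivAt_sigmoid x
  exact (h.fun_mul (h.const_sub 1)).deriv.trans (by ring)

lemma exists_softplus_add_eq (u h : ℝ) : ∃ c, |c - u| ≤ |h| ∧
    softplus (u + h) = softplus u + sigmoid u * h + sigmoid u * (1 - sigmoid u) / 2 * h ^ 2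
      + sigmoid c * (1 - sigmoid c) * (1 - 2 * sigmoid c) / 6 * h ^ 3 := by
  obtain ⟨c, hc, hT⟩ := exists_eq_taylor_add_lagrange_remainder (n := 2) contDiff_softplus u (u + h)
  refine ⟨c, by simpa using abs_sub_left_of_mem_uIcc hc, ?_⟩
  norm_num [Finset.sum_range_succ, Nat.factorial, deriv_softplus, iteratedDeriv_two_softplus,
    iteratedDeriv_three_softplus] at hT
  rw [hT]

end Real

/-- Logistic expansion (5.2) of Hjort–Pollard: with `pi(u) = eᵘ/(1+eᵘ)`,
`log((1+e^{u+h})/(1+eᵘ)) = pi(u)h + ½pi(u)(1-pi(u))h² + ⅙pi(u)(1-pi(u))γ h³`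
for some `γ = γ(u,h)` with `|γ| ≤ e^{|h|}`. -/
theorem logistic_expansion (pi : ℝ → ℝ) (hpi : ∀ u, pi u = exp u / (1 + exp u)) :
    ∀ u h : ℝ, ∃ γ : ℝ, |γ| ≤ exp |h| ∧
      log ((1 + exp (u + h)) / (1 + exp u)) =
        pi u * h + (1/2) * (pi u * (1 - pi u)) * h ^ 2
          + (1/6) * (pi u * (1 - pi u)) * γ * h ^ 3 := by
  obtain rfl : pi = sigmoid := funext fun x => (hpi x).trans (sigmoid_eq_exp_div x).symm
  intro u h
  obtain ⟨c, hcu, hexp⟩ := exists_softplus_add_eq u h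
  have hu := sigmoid_mul_one_sub_pos u
  have hc := sigmoid_mul_one_sub_pos c
  refine ⟨sigmoid c * (1 - sigmoid c) * (1 - 2 * sigmoid c) / (sigmoid u * (1 - sigmoid u)), ?_, ?_⟩
  · rw [abs_div, abs_of_pos hu, div_le_iff₀ hu, abs_mul, abs_of_pos hc]
    calc sigmoid c * (1 - sigmoid c) * |1 - 2 * sigmoid c|
        ≤ sigmoid c * (1 - sigmoid c) :=
          mul_le_of_le_one_right hc.le (abs_one_sub_two_mul_sigmoid_le c)
      _ ≤ exp |c - u| * (sigmoid u * (1 - sigmoid u)) := sigmoid_mul_one_sub_le c u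
      _ ≤ exp |h| * (sigmoid u * (1 - sigmoid u)) := by gcongr
  · rw [log_div, ← softplus, ← softplus, hexp]
    · have := (sigmoid_pos u).ne'
      have := (sub_pos.2 (sigmoid_lt_one u)).ne'
      field_simp
      ring
    all_goals positivity
end

section
/- With K(t) = log(Σᵢ wᵢ e^{aᵢt}) as above and μ_n = maxᵢ |aᵢ - ā(0)| where ā(0) = Σᵢ (wᵢ/Σⱼwⱼ)aᵢ, the remainder v(t) = K(t) - K(0) - ā(0)t - (1/2)K''(0)t² satisfies |v(t)| ≤ (4/3) μ_n³ |t|³. -/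
open Real Finset

/-!
Write `Z(s) = ∑ᵢ wᵢ e^{aᵢ s}` and let `vᵢ(s) = wᵢ e^{aᵢ s} / Z(s)` be the tilted weights, so that
`K = log Z`. From `vᵢ' = vᵢ (aᵢ - ā(s))` one gets that `K'`, `K''`, `K'''` are the tilted mean
`ā(s)`, variance and third central moment. Since `ā(s)` is a convex combination of the `aᵢ`, it lies
within `μₙ` of `ā(0)`, so every `|aᵢ - ā(s)| ≤ 2μₙ` and `|K'''| ≤ (2μₙ)³`. The remainder `v`
vanishes to second order at `0`, and integrating the bound on `v'''` three times gives
`|v(t)| ≤ (2μₙ)³ |t|³ / 6`.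
-/

theorem abs_le_of_hasDerivAt_of_abs_deriv_le_pow {f f' : ℝ → ℝ} {C : ℝ} (k : ℕ)
    (hf : ∀ s, HasDerivAt f (f' s) s) (hf0 : f 0 = 0)
    (hbound : ∀ s, |f' s| ≤ C * |s| ^ k) (t : ℝ) :
    |f t| ≤ C * |t| ^ (k + 1) / (k + 1) := by
  wlog ht : 0 ≤ t generalizing f f' t
  · have hreflect : ∀ s, HasDerivAt (fun u => f (-u)) (-f' (-s)) s := fun s =>
      ((hf (-s)).comp s (hasDerivAt_neg s)).congr_deriv (mul_neg_one _)
    simpa using this hreflect (by simpa using hf0) (fun s => by simpa using hbound (-s)) (-t)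
      (by linarith)
  have hB : ∀ s, HasDerivAt (fun u => C * u ^ (k + 1) / (k + 1)) (C * s ^ k) s := fun s => by
    refine (((hasDerivAt_pow (k + 1) s).const_mul C).div_const ((k : ℝ) + 1)).congr_deriv ?_
    rw [Nat.add_sub_cancel]
    push_cast
    field_simp
  have key := image_norm_le_of_norm_deriv_right_le_deriv_boundary (a := 0) (b := t)
    (fun s _ => (hf s).continuousAt.continuousWithinAt) (fun s _ => (hf s).hasDerivWithinAt)
    (by simp [hf0]) hB (fun s hs => by simpa [abs_of_nonneg hs.1] using hbound s)
    (Set.right_mem_Icc.2 ht)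
  simpa [abs_of_nonneg ht] using key

theorem abs_le_of_hasDerivAt_three {g g₁ g₂ g₃ : ℝ → ℝ} {C : ℝ}
    (h₁ : ∀ s, HasDerivAt g (g₁ s) s) (h₂ : ∀ s, HasDerivAt g₁ (g₂ s) s)
    (h₃ : ∀ s, HasDerivAt g₂ (g₃ s) s) (hg : g 0 = 0) (hg₁ : g₁ 0 = 0) (hg₂ : g₂ 0 = 0)
    (hC : ∀ s, |g₃ s| ≤ C) (t : ℝ) :
    |g t| ≤ C * |t| ^ 3 / 6 := by
  have b₂ : ∀ s, |g₂ s| ≤ C * |s| ^ 1 := fun s => by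
    simpa using abs_le_of_hasDerivAt_of_abs_deriv_le_pow 0 h₃ hg₂ (by simpa using hC) s
  have b₁ : ∀ s, |g₁ s| ≤ C / 2 * |s| ^ 2 := fun s => by
    have := abs_le_of_hasDerivAt_of_abs_deriv_le_pow 1 h₂ hg₁ b₂ s
    norm_num at this
    rw [sq_abs]
    linarith
  have := abs_le_of_hasDerivAt_of_abs_deriv_le_pow 2 h₁ hg b₁ t
  norm_num at this
  linarith

section Tilt

variable {ι : Type*} [Fintype ι] (w a : ι → ℝ)

theorem abs_sum_mul_le_of_abs_le {p f : ι → ℝ} {B : ℝ} (hp : ∀ i, 0 ≤ p i)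
    (hp₁ : ∑ i, p i = 1) (hf : ∀ i, |f i| ≤ B) : |∑ i, p i * f i| ≤ B :=
  calc |∑ i, p i * f i| ≤ ∑ i, p i * |f i| := by
        simpa only [abs_mul, abs_of_nonneg (hp _)]
          using abs_sum_le_sum_abs (fun i => p i * f i) univ
    _ ≤ ∑ i, p i * B := sum_le_sum fun i _ => mul_le_mul_of_nonneg_left (hf i) (hp i)
    _ = B := by rw [← sum_mul, hp₁, one_mul]

noncomputable def partitionFn (s : ℝ) : ℝ := ∑ i, w i * exp (a i * s)

noncomputable def tilt (s : ℝ) (i : ι) : ℝ := w i * exp (a i * s) / partitionFn w a s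

noncomputable def tiltedMean (s : ℝ) : ℝ := ∑ i, tilt w a s i * a i

noncomputable def tiltedCentralMoment (k : ℕ) (s : ℝ) : ℝ :=
  ∑ i, tilt w a s i * (a i - tiltedMean w a s) ^ k

variable {w a} {s : ℝ}

theorem hasDerivAt_const_mul_exp_mul (b c : ℝ) :
    HasDerivAt (fun u => b * exp (c * u)) (b * exp (c * s) * c) s := by
  simpa [mul_assoc] using ((hasDerivAt_id s).const_mul c).exp.const_mul b

theorem partitionFn_pos (hw : ∀ i, 0 ≤ w i) (hw' : ∃ i, w i ≠ 0) (s : ℝ) :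
    0 < partitionFn w a s := by
  obtain ⟨j, hj⟩ := hw'
  exact sum_pos' (fun i _ => mul_nonneg (hw i) (exp_pos _).le)
    ⟨j, mem_univ j, mul_pos ((hw j).lt_of_ne' hj) (exp_pos _)⟩

theorem tilt_nonneg (hw : ∀ i, 0 ≤ w i) (s : ℝ) (i : ι) : 0 ≤ tilt w a s i :=
  div_nonneg (mul_nonneg (hw i) (exp_pos _).le)
    (sum_nonneg fun j _ => mul_nonneg (hw j) (exp_pos _).le)

theorem sum_tilt (hZ : partitionFn w a s ≠ 0) : ∑ i, tilt w a s i = 1 := by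
  rw [← div_self hZ]
  simp only [tilt, ← sum_div, partitionFn]

theorem tiltedCentralMoment_one (hZ : partitionFn w a s ≠ 0) :
    tiltedCentralMoment w a 1 s = 0 := by
  simp only [tiltedCentralMoment, pow_one, mul_sub, sum_sub_distrib, ← sum_mul, sum_tilt hZ,
    one_mul]
  exact sub_self _

theorem hasDerivAt_partitionFn (hZ : partitionFn w a s ≠ 0) :
    HasDerivAt (partitionFn w a) (partitionFn w a s * tiltedMean w a s) s := by
  refine (HasDerivAt.fun_sum fun i _ =>
    hasDerivAt_const_mul_exp_mul (s := s) (w i) (a i)).congr_deriv ?_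
  simp only [tiltedMean, tilt, mul_sum]
  exact sum_congr rfl fun i _ => by field_simp

theorem hasDerivAt_log_partitionFn (hZ : partitionFn w a s ≠ 0) :
    HasDerivAt (fun u => log (partitionFn w a u)) (tiltedMean w a s) s :=
  ((hasDerivAt_partitionFn hZ).log hZ).congr_deriv (by field_simp)

theorem hasDerivAt_tilt (hZ : partitionFn w a s ≠ 0) (i : ι) :
    HasDerivAt (fun u => tilt w a u i) (tilt w a s i * (a i - tiltedMean w a s)) s := by
  refine ((hasDerivAt_const_mul_exp_mul (w i) (a i)).div (hasDerivAt_partitionFn hZ)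
    hZ).congr_deriv ?_
  simp only [tilt]
  field_simp

theorem tiltedCentralMoment_two_eq (hZ : partitionFn w a s ≠ 0) :
    tiltedCentralMoment w a 2 s = ∑ i, tilt w a s i * (a i - tiltedMean w a s) * a i := by
  have h : ∑ i, tilt w a s i * (a i - tiltedMean w a s) * a i
      = tiltedCentralMoment w a 2 s + tiltedMean w a s * tiltedCentralMoment w a 1 s := by
    simp only [tiltedCentralMoment, mul_sum, ← sum_add_distrib]
    exact sum_congr rfl fun i _ => by ring
  rw [h, tiltedCentralMoment_one hZ, mul_zero, add_zero]

theorem hasDerivAt_tiltedMean (hZ : partitionFn w a s ≠ 0) :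
    HasDerivAt (tiltedMean w a) (tiltedCentralMoment w a 2 s) s := by
  rw [tiltedCentralMoment_two_eq hZ]
  exact HasDerivAt.fun_sum fun i _ => (hasDerivAt_tilt hZ i).mul_const (a i)

theorem hasDerivAt_tiltedCentralMoment (hZ : partitionFn w a s ≠ 0) (k : ℕ) :
    HasDerivAt (tiltedCentralMoment w a (k + 1))
      (tiltedCentralMoment w a (k + 2) s
        - (k + 1) * tiltedCentralMoment w a 2 s * tiltedCentralMoment w a k s) s := by
  have hterm : ∀ i, HasDerivAt (fun u => tilt w a u i * (a i - tiltedMean w a u) ^ (k + 1))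
      (tilt w a s i * (a i - tiltedMean w a s) ^ (k + 2)
        - (k + 1) * tiltedCentralMoment w a 2 s * (tilt w a s i * (a i - tiltedMean w a s) ^ k))
      s := fun i =>
    ((hasDerivAt_tilt hZ i).fun_mul
      (((hasDerivAt_tiltedMean hZ).const_sub (a i)).fun_pow (k + 1))).congr_deriv
      (by rw [Nat.add_sub_cancel]; push_cast; ring)
  refine (HasDerivAt.fun_sum fun i _ => hterm i).congr_deriv ?_
  rw [sum_sub_distrib, ← mul_sum]
  rfl

variable {c μ : ℝ}

theorem abs_tiltedMean_sub_le (hw : ∀ i, 0 ≤ w i) (hZ : partitionFn w a s ≠ 0)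
    (hμ : ∀ i, |a i - c| ≤ μ) : |tiltedMean w a s - c| ≤ μ := by
  have h : tiltedMean w a s - c = ∑ i, tilt w a s i * (a i - c) := by
    simp only [tiltedMean, mul_sub, sum_sub_distrib, ← sum_mul, sum_tilt hZ, one_mul]
  rw [h]
  exact abs_sum_mul_le_of_abs_le (tilt_nonneg hw s) (sum_tilt hZ) hμ

theorem abs_tiltedCentralMoment_le (hw : ∀ i, 0 ≤ w i) (hZ : partitionFn w a s ≠ 0)
    (hμ : ∀ i, |a i - c| ≤ μ) (k : ℕ) : |tiltedCentralMoment w a k s| ≤ (2 * μ) ^ k := by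
  have hdev : ∀ i, |a i - tiltedMean w a s| ≤ 2 * μ := fun i => by
    have := abs_sub_le (a i) c (tiltedMean w a s)
    rw [abs_sub_comm c] at this
    linarith [hμ i, abs_tiltedMean_sub_le hw hZ hμ]
  exact abs_sum_mul_le_of_abs_le (tilt_nonneg hw s) (sum_tilt hZ) fun i => by
    rw [abs_pow]
    exact pow_le_pow_left₀ (abs_nonneg _) (hdev i) k

theorem abs_log_partitionFn_sub_taylor_le (hw : ∀ i, 0 ≤ w i) (hw' : ∃ i, w i ≠ 0)
    (hμ : ∀ i, |a i - c| ≤ μ) (t : ℝ) :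
    |log (partitionFn w a t) - log (partitionFn w a 0) - tiltedMean w a 0 * t
        - (1/2) * tiltedCentralMoment w a 2 0 * t ^ 2| ≤ (4/3) * μ ^ 3 * |t| ^ 3 := by
  have hZ : ∀ s, partitionFn w a s ≠ 0 := fun s => (partitionFn_pos hw hw' s).ne'
  have h₁ : ∀ s, HasDerivAt
      (fun u => log (partitionFn w a u) - log (partitionFn w a 0) - tiltedMean w a 0 * u
        - (1/2) * tiltedCentralMoment w a 2 0 * u ^ 2)
      (tiltedMean w a s - tiltedMean w a 0 - tiltedCentralMoment w a 2 0 * s) s := fun s =>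
    ((((hasDerivAt_log_partitionFn (hZ s)).sub_const _).sub
      ((hasDerivAt_id s).const_mul _)).sub ((hasDerivAt_pow 2 s).const_mul _)).congr_deriv
      (by simp only [mul_one, Nat.cast_ofNat, Nat.add_one_sub_one, pow_one]; ring)
  have h₂ : ∀ s, HasDerivAt
      (fun u => tiltedMean w a u - tiltedMean w a 0 - tiltedCentralMoment w a 2 0 * u)
      (tiltedCentralMoment w a 2 s - tiltedCentralMoment w a 2 0) s := fun s =>
    (((hasDerivAt_tiltedMean (hZ s)).sub_const _).sub
      ((hasDerivAt_id s).const_mul _)).congr_deriv (by simp)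
  have h₃ : ∀ s, HasDerivAt (fun u => tiltedCentralMoment w a 2 u - tiltedCentralMoment w a 2 0)
      (tiltedCentralMoment w a 3 s) s := fun s =>
    ((hasDerivAt_tiltedCentralMoment (hZ s) 1).sub_const _).congr_deriv
      (by simp [tiltedCentralMoment_one (hZ s)])
  have := abs_le_of_hasDerivAt_three h₁ h₂ h₃ (by simp) (by simp) (by simp)
    (fun s => abs_tiltedCentralMoment_le hw (hZ s) hμ 3) t
  linarith

end Tilt

/-- Lemma A2(ii), first bound, of Hjort–Pollard: the remainder
`v(t) = K(t) - K(0) - ā(0)t - ½K''(0)t²` of the log-partition function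
satisfies `|v(t)| ≤ (4/3) μₙ³ |t|³`, where `μₙ = maxᵢ |aᵢ - ā(0)|`. -/
theorem log_partition_remainder_bound {n : ℕ}
    (w a : Fin n → ℝ) (hw : ∀ i, 0 ≤ w i) (hw' : ∃ i, w i ≠ 0)
    (K : ℝ → ℝ) (hK : ∀ t, K t = log (∑ i, w i * exp (a i * t)))
    (v0 : Fin n → ℝ) (hv0 : ∀ i, v0 i = w i / ∑ j, w j)
    (abar0 : ℝ) (habar0 : abar0 = ∑ i, v0 i * a i)
    (K2 : ℝ) (hK2 : K2 = ∑ i, v0 i * (a i - abar0) ^ 2)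
    (μn : ℝ) (hμn : IsGreatest (Set.range fun i => |a i - abar0|) μn) :
    ∀ t : ℝ, |K t - K 0 - abar0 * t - (1/2) * K2 * t ^ 2|
        ≤ (4/3) * μn ^ 3 * |t| ^ 3 := by
  have hv : v0 = tilt w a 0 := funext fun i => by simp [hv0, tilt, partitionFn]
  have habar : abar0 = tiltedMean w a 0 := by rw [habar0, hv]; rfl
  have hvar : K2 = tiltedCentralMoment w a 2 0 := by rw [hK2, hv, habar]; rfl
  intro t
  rw [hK, hK, hvar, habar]
  exact abs_log_partitionFn_sub_taylor_le hw hw' (fun i => hμn.2 ⟨i, rfl⟩) t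
end

section
/- In the setting of Lemma A1, write L_n(δ) = Σᵢ E[z_{n,i}²(Y_{n,i}-q_{n,i})² I{|z_{n,i}(Y_{n,i}-q_{n,i})| ≥ δ}] and N_n(δ) = Σᵢ z_{n,i}² q_{n,i}(1-q_{n,i}) I{|z_{n,i}| ≥ δ}. Then (1/2) N_n(2δ) ≤ L_n(δ) ≤ N_n(δ) for every δ > 0. -/
open MeasureTheory Finset

private lemma my_integrable_dirac (f : ℝ → ℝ) (hf : Measurable f) (a : ℝ) :
    Integrable f (Measure.dirac a) :=
  ⟨hf.aestronglyMeasurable, by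
    simp [HasFiniteIntegral, MeasureTheory.lintegral_dirac]⟩

private lemma integral_bern (a b : ℝ) (ha : 0 ≤ a) (hb : 0 ≤ b)
    (f : ℝ → ℝ) (hf : Measurable f) :
    ∫ y, f y ∂(ENNReal.ofReal a • Measure.dirac (1:ℝ)
      + ENNReal.ofReal b • Measure.dirac (0:ℝ)) = a * f 1 + b * f 0 := by
  have h1 : Integrable f (ENNReal.ofReal a • Measure.dirac (1:ℝ)) :=
    ((my_integrable_dirac f hf 1).smul_measure (by simp))
  have h0 : Integrable f (ENNReal.ofReal b • Measure.dirac (0:ℝ)) :=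
    ((my_integrable_dirac f hf 0).smul_measure (by simp))
  rw [integral_add_measure h1 h0, integral_smul_measure, integral_smul_measure,
    integral_dirac, integral_dirac, ENNReal.toReal_ofReal ha, ENNReal.toReal_ofReal hb]
  simp [smul_eq_mul]

private lemma key_lower (δ q a : ℝ) (hδ : 0 < δ) (h0 : 0 ≤ q) (h1 : q ≤ 1) (ha : 0 ≤ a) :
    (1/2) * (a^2 * (q*(1-q)) * (if 2*δ ≤ a then (1:ℝ) else 0)) ≤
      q * (a^2 * (1-q)^2 * (if δ ≤ a*(1-q) then (1:ℝ) else 0))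
      + (1-q) * (a^2 * q^2 * (if δ ≤ a*q then (1:ℝ) else 0)) := by
  have h1q : (0:ℝ) ≤ 1 - q := by linarith
  split_ifs with hc hA hB hB hA hB hB
  · nlinarith [mul_nonneg (mul_nonneg (sq_nonneg a) h0) h1q]
  · have hap : 0 < a := by linarith
    have hq2 : q ≤ 1/2 := by nlinarith [lt_of_not_ge hB]
    nlinarith [mul_nonneg (mul_nonneg (mul_nonneg (sq_nonneg a) h0) h1q)
      (show (0:ℝ) ≤ 1/2 - q by linarith)]
  · have hap : 0 < a := by linarith
    have hq2 : 1/2 ≤ q := by nlinarith [lt_of_not_ge hA]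
    nlinarith [mul_nonneg (mul_nonneg (mul_nonneg (sq_nonneg a) h0) h1q)
      (show (0:ℝ) ≤ q - 1/2 by linarith)]
  · exfalso; nlinarith [lt_of_not_ge hA, lt_of_not_ge hB]
  all_goals nlinarith [mul_nonneg (mul_nonneg h0 (sq_nonneg a)) (sq_nonneg (1-q)),
      mul_nonneg (mul_nonneg h1q (sq_nonneg a)) (sq_nonneg q)]

private lemma key_upper (δ q a : ℝ) (hδ : 0 < δ) (h0 : 0 ≤ q) (h1 : q ≤ 1) (ha : 0 ≤ a) :
    q * (a^2 * (1-q)^2 * (if δ ≤ a*(1-q) then (1:ℝ) else 0))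
      + (1-q) * (a^2 * q^2 * (if δ ≤ a*q then (1:ℝ) else 0))
      ≤ a^2 * (q*(1-q)) * (if δ ≤ a then (1:ℝ) else 0) := by
  have h1q : (0:ℝ) ≤ 1 - q := by linarith
  have key1 : a * (1-q) ≤ a := by nlinarith [mul_nonneg ha h0]
  have key2 : a * q ≤ a := by nlinarith [mul_nonneg ha h1q]
  split_ifs with hA hB hC hC hB hC hC
  · nlinarith [mul_nonneg (mul_nonneg (sq_nonneg a) h0) h1q]
  · exact absurd (le_trans hA key1) hC
  · nlinarith [mul_nonneg (mul_nonneg (mul_nonneg (sq_nonneg a) h0) h1q) h0]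
  · exact absurd (le_trans hA key1) hC
  · nlinarith [mul_nonneg (mul_nonneg (mul_nonneg (sq_nonneg a) h0) h1q) h1q]
  · exact absurd (le_trans hB key2) hC
  · nlinarith [mul_nonneg (mul_nonneg (sq_nonneg a) h0) h1q]
  · nlinarith

private lemma rewr (δ q zz : ℝ) (h0 : 0 ≤ q) (h1 : q ≤ 1) :
    q * (zz^2 * ((1:ℝ)-q)^2 * (if δ ≤ |zz * (1 - q)| then (1:ℝ) else 0))
      + (1-q) * (zz^2 * ((0:ℝ)-q)^2 * (if δ ≤ |zz * (0 - q)| then (1:ℝ) else 0))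
    = q * (|zz|^2 * (1-q)^2 * (if δ ≤ |zz| *(1-q) then (1:ℝ) else 0))
      + (1-q) * (|zz|^2 * q^2 * (if δ ≤ |zz| *q then (1:ℝ) else 0)) := by
  have e1 : |zz * (1-q)| = |zz| * (1-q) := by
    rw [abs_mul, abs_of_nonneg (show (0:ℝ) ≤ 1 - q by linarith)]
  have e0 : |zz * (0-q)| = |zz| * q := by
    rw [abs_mul, abs_of_nonpos (show (0:ℝ) - q ≤ 0 by linarith)]
    ring
  rw [e1, e0, sq_abs]
  ring_nf

/-- Two-sided comparison of the Lindeberg functional `Lₙ(δ)` with the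
negligibility functional `Nₙ(δ)` for weighted Bernoulli variables
(Lemma A1 of Hjort–Pollard): `½ Nₙ(2δ) ≤ Lₙ(δ) ≤ Nₙ(δ)`. -/
theorem lindeberg_comparison {n : ℕ}
    {Ω : Type*} [MeasurableSpace Ω] (P : Measure Ω) [IsProbabilityMeasure P]
    (Y : Fin n → Ω → ℝ) (q z : Fin n → ℝ)
    (hq : ∀ i, q i ∈ Set.Icc (0:ℝ) 1)
    (hmeas : ∀ i, Measurable (Y i))
    (hbern : ∀ i, Measure.map (Y i) P =
      ENNReal.ofReal (q i) • Measure.dirac (1:ℝ)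
        + ENNReal.ofReal (1 - q i) • Measure.dirac (0:ℝ))
    (L N : ℝ → ℝ)
    (hL : ∀ δ, L δ = ∑ i, ∫ ω, (z i) ^ 2 * (Y i ω - q i) ^ 2
        * (if δ ≤ |z i * (Y i ω - q i)| then (1:ℝ) else 0) ∂P)
    (hN : ∀ δ, N δ = ∑ i, (z i) ^ 2 * (q i * (1 - q i))
        * (if δ ≤ |z i| then (1:ℝ) else 0)) :
    ∀ δ : ℝ, 0 < δ → (1/2) * N (2 * δ) ≤ L δ ∧ L δ ≤ N δ := by
  intro δ hδ
  have hint : ∀ i,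
      (∫ ω, (z i) ^ 2 * (Y i ω - q i) ^ 2
        * (if δ ≤ |z i * (Y i ω - q i)| then (1:ℝ) else 0) ∂P)
      = q i * (|z i|^2 * (1 - q i)^2 * (if δ ≤ |z i| *(1 - q i) then (1:ℝ) else 0))
        + (1 - q i) * (|z i|^2 * (q i)^2 * (if δ ≤ |z i| *(q i) then (1:ℝ) else 0)) := by
    intro i
    have hfm : Measurable (fun y : ℝ => (z i)^2 * (y - q i)^2
        * (if δ ≤ |z i * (y - q i)| then (1:ℝ) else 0)) := by
      apply Measurable.mul
      · fun_prop
      · exact Measurable.ite (measurableSet_le measurable_const (by fun_prop))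
          measurable_const measurable_const
    have h1 : ∫ ω, (z i) ^ 2 * (Y i ω - q i) ^ 2
          * (if δ ≤ |z i * (Y i ω - q i)| then (1:ℝ) else 0) ∂P
        = ∫ y, (z i)^2 * (y - q i)^2
          * (if δ ≤ |z i * (y - q i)| then (1:ℝ) else 0) ∂(Measure.map (Y i) P) :=
      (integral_map (hmeas i).aemeasurable hfm.aestronglyMeasurable).symm
    have h2 := integral_bern (q i) (1 - q i) (hq i).1 (by linarith [(hq i).2]) _ hfm
    rw [h1, hbern i, h2]
    exact rewr δ (q i) (z i) (hq i).1 (hq i).2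
  rw [hL δ, hN δ, hN (2*δ), Finset.mul_sum]
  have hNre : ∀ (δ' : ℝ) i, (z i) ^ 2 * (q i * (1 - q i)) * (if δ' ≤ |z i| then (1:ℝ) else 0)
      = |z i| ^ 2 * (q i * (1 - q i)) * (if δ' ≤ |z i| then (1:ℝ) else 0) := by
    intro δ' i; rw [sq_abs]
  constructor
  · apply Finset.sum_le_sum
    intro i _
    rw [hint i, hNre]
    exact key_lower δ (q i) (|z i|) hδ (hq i).1 (hq i).2 (abs_nonneg _)
  · apply Finset.sum_le_sum
    intro i _
    rw [hint i, hNre]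
    exact key_upper δ (q i) (|z i|) hδ (hq i).1 (hq i).2 (abs_nonneg _)
end
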